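/- arXiv:math/0502038 — 5 statements merged into one kernel-verified Lean document; each statement's English description precedes it below -/
import Mathlib

section
/- Let R > 2 and p(z) = z^2 - R, viewed as a map of ℂ. If z ∈ ℂ has bounded orbit under p (i.e. {pⁿ(z) : n ≥ 0} is bounded), then z is real. In particular the filled Julia set of p is contained in the real line. -/
/-!
Let `β > 2` be the fixed point `β² = β + R`. A point `w` with `‖w‖ > β` escapes, because
`‖w² - R‖ - β ≥ ‖w‖² - β² ≥ 2 (‖w‖ - β)`; so a bounded orbit stays in the closed disc of
radius `β`. On that disc `imRatio β w = (Im w)² / (β² - (Re w)²)` lies in `[0, 1]`, and it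
at least doubles along an orbit that stays in the disc. Hence it vanishes at the start of a bounded
orbit, which is to say that the starting point is real.
-/

theorem nonpos_of_bddAbove_of_two_mul_le {u : ℕ → ℝ} {C : ℝ} (hC : ∀ k, u k ≤ C)
    (h : ∀ k, 0 ≤ u k → 2 * u k ≤ u (k + 1)) : u 0 ≤ 0 := by
  by_contra! h0
  have hpow : ∀ k, 2 ^ k * u 0 ≤ u k := by
    intro k
    induction k with
    | zero => simp
    | succ k ih =>
      calc 2 ^ (k + 1) * u 0 = 2 * (2 ^ k * u 0) := by ring
        _ ≤ 2 * u k := by linarith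
        _ ≤ u (k + 1) := h k (le_trans (by positivity) ih)
  obtain ⟨k, hk⟩ := pow_unbounded_of_one_lt (C / u 0) one_lt_two
  rw [div_lt_iff₀ h0] at hk
  linarith [hpow k, hC k]

theorem norm_sq_sub_abs_le_norm_sq_sub (w : ℂ) (R : ℝ) : ‖w‖ ^ 2 - |R| ≤ ‖w ^ 2 - R‖ := by
  have h := norm_sub_norm_le (w ^ 2) (R : ℂ)
  rwa [norm_pow, Complex.norm_real, Real.norm_eq_abs] at h

theorem re_sq_sub_ofReal (w : ℂ) (R : ℝ) : (w ^ 2 - R).re = w.re ^ 2 - w.im ^ 2 - R := by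
  simp [sq]

theorem im_sq_sub_ofReal (w : ℂ) (R : ℝ) : (w ^ 2 - R).im = 2 * w.re * w.im := by
  simp [sq]; ring

theorem re_sq_add_im_sq_eq_sq_norm (w : ℂ) : w.re ^ 2 + w.im ^ 2 = ‖w‖ ^ 2 := by
  rw [Complex.sq_norm, Complex.normSq_apply]; ring

noncomputable def imRatio (β : ℝ) (w : ℂ) : ℝ := w.im ^ 2 / (β ^ 2 - w.re ^ 2)

section Orbit

variable {R β : ℝ}

theorem imRatio_le_one {w : ℂ} (hw : ‖w‖ ≤ β) : imRatio β w ≤ 1 := by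
  have h := re_sq_add_im_sq_eq_sq_norm w
  have : ‖w‖ ^ 2 ≤ β ^ 2 := pow_le_pow_left₀ (norm_nonneg w) hw 2
  exact div_le_one_of_le₀ (by linarith) (by nlinarith)

theorem im_eq_zero_of_imRatio_nonpos {w : ℂ} (hw : ‖w‖ ≤ β) (h : imRatio β w ≤ 0) :
    w.im = 0 := by
  by_contra him
  have hsq := re_sq_add_im_sq_eq_sq_norm w
  have hnorm : ‖w‖ ^ 2 ≤ β ^ 2 := pow_le_pow_left₀ (norm_nonneg w) hw 2
  have him2 : 0 < w.im ^ 2 := by positivity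
  have : 0 < imRatio β w := div_pos him2 (by linarith)
  linarith

theorem two_mul_imRatio_le (hβ : β ^ 2 = β + R) (hβR : β < R) {w : ℂ} (hw : ‖w‖ ≤ β)
    (hw' : ‖w ^ 2 - R‖ ≤ β) : 2 * imRatio β w ≤ imRatio β (w ^ 2 - R) := by
  have hβ0 : 0 ≤ β := (norm_nonneg w).trans hw
  have hdisk := pow_le_pow_left₀ (norm_nonneg w) hw 2
  have hdisk' := pow_le_pow_left₀ (norm_nonneg _) hw' 2
  rw [← re_sq_add_im_sq_eq_sq_norm] at hdisk
  rw [← re_sq_add_im_sq_eq_sq_norm, re_sq_sub_ofReal, im_sq_sub_ofReal] at hdisk'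
  unfold imRatio
  rw [re_sq_sub_ofReal, im_sq_sub_ofReal]
  set a := w.re
  set b := w.im
  rcases eq_or_ne b 0 with hb | hb
  · rw [hb, sq, zero_mul, zero_div, mul_zero]
    exact div_nonneg (sq_nonneg _) (by nlinarith)
  have hb2 : 0 < b ^ 2 := by positivity
  have hlow : -β ≤ a ^ 2 - b ^ 2 - R := by nlinarith
  have ha2 : 0 < a ^ 2 := by linarith
  have hD : 0 < β ^ 2 - a ^ 2 := by linarith
  -- uses `β² = β + R`; the second factor is `Re (w² - R) + β ≥ 0`
  have hfactor : β ^ 2 - (a ^ 2 - b ^ 2 - R) ^ 2 =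
      (β ^ 2 - a ^ 2 + b ^ 2) * (a ^ 2 - b ^ 2 - R + β) := by
    linear_combination (-(a ^ 2 - b ^ 2 - R) - β) * hβ
  have hD' : 0 < β ^ 2 - (a ^ 2 - b ^ 2 - R) ^ 2 := by nlinarith [mul_pos ha2 hb2]
  rw [← mul_div_assoc, div_le_div_iff₀ hD hD', hfactor]
  have hprod :
      (β ^ 2 - a ^ 2 + b ^ 2) * (a ^ 2 - b ^ 2 - R + β) ≤ 2 * (β ^ 2 - a ^ 2) * a ^ 2 :=
    mul_le_mul (by linarith) (by linarith) (by linarith) (by linarith)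
  calc 2 * b ^ 2 * ((β ^ 2 - a ^ 2 + b ^ 2) * (a ^ 2 - b ^ 2 - R + β))
      ≤ 2 * b ^ 2 * (2 * (β ^ 2 - a ^ 2) * a ^ 2) := by gcongr
    _ = (2 * a * b) ^ 2 * (β ^ 2 - a ^ 2) := by ring

theorem norm_le_of_orbit_bounded {s : ℕ → ℂ} (hβ : β ^ 2 = β + R) (hβ1 : 1 ≤ β)
    (hs : ∀ n, s (n + 1) = s n ^ 2 - R) {M : ℝ} (hM : ∀ n, ‖s n‖ ≤ M) (n : ℕ) :
    ‖s n‖ ≤ β := by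
  have hR : |R| = R := abs_of_nonneg (by nlinarith)
  suffices ‖s (n + 0)‖ - β ≤ 0 by simpa using this
  refine nonpos_of_bddAbove_of_two_mul_le (u := fun k => ‖s (n + k)‖ - β) (C := M - β)
    (fun k => by linarith [hM (n + k)]) ?_
  intro k hk
  have hstep := norm_sq_sub_abs_le_norm_sq_sub (s (n + k)) R
  rw [hR, ← hs] at hstep
  show 2 * (‖s (n + k)‖ - β) ≤ ‖s (n + k + 1)‖ - β
  -- `‖w‖² - R - β = (‖w‖ - β)(‖w‖ + β)` and `‖w‖ + β ≥ 2`
  nlinarith [mul_nonneg hk (by linarith : (0 : ℝ) ≤ ‖s (n + k)‖ + β - 2)]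

theorem im_eq_zero_of_orbit_norm_le (hβ : β ^ 2 = β + R) (hβR : β < R) {s : ℕ → ℂ}
    (hs : ∀ n, s (n + 1) = s n ^ 2 - R) (hdisk : ∀ n, ‖s n‖ ≤ β) : (s 0).im = 0 :=
  im_eq_zero_of_imRatio_nonpos (hdisk 0) <|
    nonpos_of_bddAbove_of_two_mul_le (u := fun n => imRatio β (s n))
      (fun n => imRatio_le_one (hdisk n))
      (fun n _ => hs n ▸ two_mul_imRatio_le hβ hβR (hdisk n) (hs n ▸ hdisk (n + 1)))

end Orbit

theorem exists_sq_eq_add_of_two_lt {R : ℝ} (hR : 2 < R) :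
    ∃ β : ℝ, β ^ 2 = β + R ∧ 1 ≤ β ∧ β < R := by
  have hsq : √(1 + 4 * R) ^ 2 = 1 + 4 * R := Real.sq_sqrt (by linarith)
  have h3 : 3 < √(1 + 4 * R) := by nlinarith [Real.sqrt_nonneg (1 + 4 * R)]
  refine ⟨(1 + √(1 + 4 * R)) / 2, by linear_combination hsq / 4, by linarith, by nlinarith⟩

/-- For `R > 2` and `p(z) = z² - R` as a map of `ℂ`: if `z ∈ ℂ` has
bounded forward orbit under `p`, then `z` is real. In particular the filled Julia
set of `p` is contained in the real line. -/
theorem stmt6 (R : ℝ) (hR : 2 < R)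
    (p : ℂ → ℂ) (hp : ∀ z, p z = z ^ 2 - (R : ℂ))
    (z : ℂ) (hz : Bornology.IsBounded (Set.range fun n : ℕ => p^[n] z)) :
    z.im = 0 := by
  obtain ⟨β, hβ, hβ1, hβR⟩ := exists_sq_eq_add_of_two_lt hR
  have horbit : ∀ n, p^[n + 1] z = p^[n] z ^ 2 - R := fun n => by
    rw [Function.iterate_succ_apply', hp]
  obtain ⟨M, hM⟩ := isBounded_iff_forall_norm_le.mp hz
  have hdisk := norm_le_of_orbit_bounded hβ hβ1 horbit fun n => hM _ ⟨n, rfl⟩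
  exact im_eq_zero_of_orbit_norm_le hβ hβR horbit hdisk
end

section
/- Let p : ℂ → ℂ be a polynomial, let B₁, …, B_N be nonempty compact subsets of ℂ with union 𝓑' = ⋃ₖ Bₖ, and suppose p is box-expansive on this collection: there exist L > 1 and positive constants φ₁, …, φ_N such that whenever p(Bₖ) ∩ Bⱼ ≠ ∅ one has φⱼ·|p'(z)| ≥ L·φₖ for all z ∈ Bₖ. Let Λ₁ = 𝓑' ∩ p⁻¹(𝓑'). Then there exist η > 1 and a continuous function ρ : ℂ → ℝ with ρ(z) > 0 for all z, such that ρ(p(z))·|p'(z)| ≥ η·ρ(z) for every z ∈ Λ₁; i.e. p uniformly expands the conformal metric ρ(z)|dz| by the factor η on Λ₁. -/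
/-!
Smooth the box metric by `ρ(w) = minₖ φₖ · (1 + c · dist(w, Bₖ))`, which is continuous, positive
and at most `φₖ` on `Bₖ`. Let `z ∈ Bₖ` with `p(z) ∈ Bⱼ'`, and let `j` realise the minimum defining
`ρ(p(z))`. If `p(Bₖ)` meets `Bⱼ`, then `ρ(p(z)) ≥ φⱼ` and box-expansion from `Bₖ` to `Bⱼ` applies.
Otherwise `p(z)` stays a distance `δ > 0` away from `Bⱼ`, uniformly over all such pairs by
compactness, so for `c` large `ρ(p(z)) ≥ c δ φⱼ ≥ φⱼ'` and box-expansion from `Bₖ` to `Bⱼ'`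
applies. Either way `ρ(p(z)) · |p'(z)| ≥ L · φₖ ≥ L · ρ(z)`.
-/

open Metric Set

variable {X ι : Type*} [MetricSpace X]

def IsBoxExpansive (f : X → X) (g : X → ℝ) (B : ι → Set X) (φ : ι → ℝ) (L : ℝ) : Prop :=
  ∀ k j, (f '' B k ∩ B j).Nonempty → ∀ z ∈ B k, L * φ k ≤ φ j * g z

theorem exists_pos_forall_le_infDist_of_disjoint {K F : Set X} (hK : IsCompact K)
    (hF : IsClosed F) (hFne : F.Nonempty) (hKF : Disjoint K F) :
    ∃ δ > 0, ∀ w ∈ K, δ ≤ infDist w F :=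
  hK.exists_forall_le' (continuous_infDist_pt F).continuousOn fun _ hw =>
    (hF.notMem_iff_infDist_pos hFne).mp (hKF.notMem_of_mem_left hw)

theorem exists_pos_forall_le_infDist_of_disjoint_of_finite {κ : Type*} [Finite ι] [Finite κ]
    {K : ι → Set X} {F : κ → Set X} (hK : ∀ i, IsCompact (K i)) (hF : ∀ j, IsClosed (F j))
    (hFne : ∀ j, (F j).Nonempty) :
    ∃ δ > 0, ∀ i j, Disjoint (K i) (F j) → ∀ w ∈ K i, δ ≤ infDist w (F j) := by
  have hpair : ∀ q : ι × κ, ∀ᶠ δ in nhdsWithin (0 : ℝ) (Ioi 0),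
      Disjoint (K q.1) (F q.2) → ∀ w ∈ K q.1, δ ≤ infDist w (F q.2) := by
    rintro ⟨i, j⟩
    by_cases hKF : Disjoint (K i) (F j)
    · obtain ⟨δ, hδ, hle⟩ :=
        exists_pos_forall_le_infDist_of_disjoint (hK i) (hF j) (hFne j) hKF
      filter_upwards [Ioc_mem_nhdsGT hδ] with ε hε _ w hw using hε.2.trans (hle w hw)
    · exact Filter.Eventually.of_forall fun _ h => absurd h hKF
  obtain ⟨δ, hδ, hpos⟩ := ((Filter.eventually_all.mpr hpair).and self_mem_nhdsWithin).exists
  exact ⟨δ, hpos, fun i j => hδ (i, j)⟩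

section SmoothedBoxDensity

variable [Fintype ι] [Nonempty ι]

noncomputable def smoothedBoxDensity (φ : ι → ℝ) (c : ℝ) (B : ι → Set X) (w : X) : ℝ :=
  Finset.univ.inf' Finset.univ_nonempty fun k => φ k * (1 + c * infDist w (B k))

variable {φ : ι → ℝ} {c : ℝ} {B : ι → Set X}

theorem continuous_smoothedBoxDensity : Continuous (smoothedBoxDensity φ c B) :=
  Continuous.finset_inf'_apply Finset.univ_nonempty fun k _ => by
    have := continuous_infDist_pt (B k); fun_prop

theorem smoothedBoxDensity_pos (hφ : ∀ k, 0 < φ k) (hc : 0 ≤ c) (w : X) :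
    0 < smoothedBoxDensity φ c B w :=
  (Finset.lt_inf'_iff _).mpr fun k _ => by
    have := hφ k; have := infDist_nonneg (x := w) (s := B k); positivity

theorem smoothedBoxDensity_le_of_mem {k : ι} {w : X} (hw : w ∈ B k) :
    smoothedBoxDensity φ c B w ≤ φ k := by
  have h := Finset.inf'_le (fun k => φ k * (1 + c * infDist w (B k))) (Finset.mem_univ k)
  rwa [infDist_zero_of_mem hw, mul_zero, add_zero, mul_one] at h

theorem exists_smoothedBoxDensity_eq (w : X) :
    ∃ j, smoothedBoxDensity φ c B w = φ j * (1 + c * infDist w (B j)) := by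
  obtain ⟨j, -, hj⟩ := Finset.exists_mem_eq_inf' Finset.univ_nonempty
    fun k => φ k * (1 + c * infDist w (B k))
  exact ⟨j, hj⟩

theorem IsBoxExpansive.mul_smoothedBoxDensity_le {f : X → X} {g : X → ℝ} {L δ : ℝ}
    (hexp : IsBoxExpansive f g B φ L) (hL : 0 ≤ L) (hφ : ∀ k, 0 < φ k) (hc : 0 ≤ c)
    (hδ : ∀ k j, Disjoint (f '' B k) (B j) → ∀ z ∈ B k, δ ≤ infDist (f z) (B j))
    (hcδ : ∀ j j', φ j' ≤ c * δ * φ j) {k j' : ι} {z : X} (hz : z ∈ B k) (hfz : f z ∈ B j') :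
    L * smoothedBoxDensity φ c B z ≤ smoothedBoxDensity φ c B (f z) * g z := by
  have hkj' : L * φ k ≤ φ j' * g z := hexp k j' ⟨f z, mem_image_of_mem f hz, hfz⟩ z hz
  have hg : 0 ≤ g z :=
    nonneg_of_mul_nonneg_right ((mul_nonneg hL (hφ k).le).trans hkj') (hφ j')
  obtain ⟨j, hj⟩ := exists_smoothedBoxDensity_eq (φ := φ) (c := c) (B := B) (f z)
  have hd := infDist_nonneg (x := f z) (s := B j)
  obtain ⟨m, hm, hkm⟩ : ∃ m, φ m ≤ smoothedBoxDensity φ c B (f z) ∧ L * φ k ≤ φ m * g z := by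
    by_cases hkj : Disjoint (f '' B k) (B j)
    · refine ⟨j', ?_, hkj'⟩
      calc φ j' ≤ c * δ * φ j := hcδ j j'
        _ ≤ c * infDist (f z) (B j) * φ j := by gcongr; exacts [(hφ j).le, hδ k j hkj z hz]
        _ ≤ smoothedBoxDensity φ c B (f z) := by rw [hj]; nlinarith [hφ j]
    · refine ⟨j, ?_, hexp k j (not_disjoint_iff_nonempty_inter.mp hkj) z hz⟩
      rw [hj]
      nlinarith [hφ j, mul_nonneg hc hd]
  calc L * smoothedBoxDensity φ c B z ≤ L * φ k := by
        gcongr; exact smoothedBoxDensity_le_of_mem hz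
    _ ≤ φ m * g z := hkm
    _ ≤ smoothedBoxDensity φ c B (f z) * g z := by gcongr

end SmoothedBoxDensity

theorem IsBoxExpansive.exists_continuous_expanded_density [Finite ι] {f : X → X} {g : X → ℝ}
    {B : ι → Set X} {φ : ι → ℝ} {L : ℝ} (hexp : IsBoxExpansive f g B φ L)
    (hf : ∀ k, ContinuousOn f (B k)) (hBne : ∀ k, (B k).Nonempty) (hB : ∀ k, IsCompact (B k))
    (hφ : ∀ k, 0 < φ k) (hL : 0 ≤ L) :
    ∃ ρ : X → ℝ, Continuous ρ ∧ (∀ w, 0 < ρ w) ∧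
      ∀ z ∈ (⋃ k, B k) ∩ f ⁻¹' ⋃ k, B k, L * ρ z ≤ ρ (f z) * g z := by
  cases nonempty_fintype ι
  rcases isEmpty_or_nonempty ι with hι | hι
  · exact ⟨fun _ => 1, continuous_const, fun _ => one_pos, by simp⟩
  obtain ⟨δ, hδ, hsep⟩ := exists_pos_forall_le_infDist_of_disjoint_of_finite
    (fun k => (hB k).image_of_continuousOn (hf k)) (fun j => (hB j).isClosed) hBne
  obtain ⟨c, hc⟩ := Finite.exists_le fun q : ι × ι => φ q.2 / (δ * φ q.1)
  have hcδ : ∀ j j', φ j' ≤ c * δ * φ j := fun j j' => by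
    have := hc (j, j'); rw [div_le_iff₀ (by have := hφ j; positivity)] at this; linarith
  have hc0 : 0 ≤ c := by
    have hφ₀ := hφ hι.some
    exact (pos_of_mul_pos_left (pos_of_mul_pos_left (hφ₀.trans_le (hcδ _ _)) hφ₀.le) hδ.le).le
  refine ⟨smoothedBoxDensity φ c B, continuous_smoothedBoxDensity,
    smoothedBoxDensity_pos hφ hc0, ?_⟩
  rintro z ⟨hz, hfz⟩
  obtain ⟨k, hzk⟩ := mem_iUnion.mp hz
  obtain ⟨j', hfzj'⟩ := mem_iUnion.mp hfz
  exact hexp.mul_smoothedBoxDensity_le hL hφ hc0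
    (fun k j hkj z hz => hsep k j hkj (f z) (mem_image_of_mem f hz)) hcδ hzk hfzj'

/-- Let `p` be a polynomial map of `ℂ`, and `B₁, …, B_N` nonempty compact
subsets of `ℂ` with union `𝓑'`. Suppose `p` is box-expansive: there are `L > 1` and
positive constants `φₖ` such that whenever `p(Bₖ) ∩ Bⱼ ≠ ∅`, one has
`φⱼ·|p'(z)| ≥ L·φₖ` for all `z ∈ Bₖ`. Let `Λ₁ = 𝓑' ∩ p⁻¹(𝓑')`. Then there exist
`η > 1` and a continuous positive function `ρ : ℂ → ℝ` such that
`ρ(p(z))·|p'(z)| ≥ η·ρ(z)` for every `z ∈ Λ₁`. -/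
theorem stmt14 (P : Polynomial ℂ)
    (N : ℕ) (B : Fin N → Set ℂ)
    (hBne : ∀ k, (B k).Nonempty) (hBcpt : ∀ k, IsCompact (B k))
    (L : ℝ) (hL : 1 < L)
    (φ : Fin N → ℝ) (hφ : ∀ k, 0 < φ k)
    (hexp : ∀ k j : Fin N, ((fun z => P.eval z) '' B k ∩ B j).Nonempty →
      ∀ z ∈ B k, φ j * ‖P.derivative.eval z‖ ≥ L * φ k)
    (𝓑 Λ₁ : Set ℂ)
    (h𝓑 : 𝓑 = ⋃ k, B k)
    (hΛ : Λ₁ = 𝓑 ∩ (fun z => P.eval z) ⁻¹' 𝓑) :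
    ∃ η : ℝ, 1 < η ∧ ∃ ρ : ℂ → ℝ, Continuous ρ ∧ (∀ z, 0 < ρ z) ∧
      ∀ z ∈ Λ₁, ρ (P.eval z) * ‖P.derivative.eval z‖ ≥ η * ρ z := by
  have hbox : IsBoxExpansive (fun z => P.eval z) (fun z => ‖P.derivative.eval z‖) B φ L := hexp
  obtain ⟨ρ, hρ, hρpos, hρexp⟩ := hbox.exists_continuous_expanded_density
    (fun _ => P.continuous.continuousOn) hBne hBcpt hφ (zero_le_one.trans hL.le)
  subst h𝓑 hΛ
  exact ⟨L, hL, ρ, hρ, hρpos, hρexp⟩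
end

section
/- Let f(z,w) = (p(z), q(z,w)) be a polynomial skew product of ℂ², let B₁, …, B_N be nonempty compact subsets of ℂ² with union 𝓑' = ⋃ₖ Bₖ, and suppose f is box vertically expansive: there exist L > 1 and positive constants φ₁, …, φ_N such that whenever f(Bₖ) ∩ Bⱼ ≠ ∅ one has φⱼ·|∂q/∂w(z,w)| ≥ L·φₖ for all (z,w) ∈ Bₖ. Set c = (minₖ φₖ)/(maxₖ φₖ) > 0. Then for every n ≥ 1 and every point (z,w) whose first n iterates satisfy fⁱ(z,w) ∈ 𝓑' for i = 0, 1, …, n, one has |(Qⁿ_z)'(w)| ≥ c·Lⁿ, where (Qⁿ_z)'(w) = ∏_{i=0}^{n-1} (∂q/∂w)(fⁱ(z,w)) is the vertical derivative of fⁿ. In particular f is vertically expanding on the set of points whose full forward orbit stays in 𝓑'. -/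
/-!
Along an orbit segment `x, f x, …, fⁿ x` staying in `⋃ₖ Bₖ`, pick boxes `B_{k₀}, …, B_{kₙ}`
containing the successive points. Consecutive boxes satisfy `f(B_{kᵢ}) ∩ B_{kᵢ₊₁} ≠ ∅`, so the
expansion hypothesis gives `φ_{kᵢ₊₁}·|∂q/∂w(fⁱ x)| ≥ L·φ_{kᵢ}`; multiplying these telescopes to
`φ_{kₙ}·|(Qⁿ)'| ≥ Lⁿ·φ_{k₀}`, and `φ_{k₀}/φ_{kₙ} ≥ min φ / max φ`.
-/

open Finset

theorem Finset.inf'_div_sup'_pos {ι : Type*} {s : Finset ι} (hs : s.Nonempty) {φ : ι → ℝ}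
    (hφ : ∀ k, 0 < φ k) : 0 < s.inf' hs φ / s.sup' hs φ := by
  obtain ⟨k, hk⟩ := hs
  have hinf : 0 < s.inf' ⟨k, hk⟩ φ := (lt_inf'_iff _).2 fun k _ => hφ k
  exact div_pos hinf (hinf.trans_le ((inf'_le φ hk).trans (le_sup' φ hk)))

theorem Finset.inf'_div_sup'_le_div {ι : Type*} {s : Finset ι} (hs : s.Nonempty) {φ : ι → ℝ}
    (hφ : ∀ k, 0 < φ k) {a b : ι} (ha : a ∈ s) (hb : b ∈ s) :
    s.inf' hs φ / s.sup' hs φ ≤ φ a / φ b :=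
  div_le_div₀ (hφ a).le (inf'_le φ ha) (hφ b) (le_sup' φ hb)

theorem exists_pow_mul_le_mul_prod_of_box_expansion {α ι : Type*} (f : α → α) (g : α → ℝ)
    (hg : ∀ x, 0 ≤ g x) (B : ι → Set α) (φ : ι → ℝ) {L : ℝ} (hL : 0 ≤ L)
    (hexp : ∀ k j, (f '' B k ∩ B j).Nonempty → ∀ x ∈ B k, L * φ k ≤ φ j * g x) (x : α) :
    ∀ n, (∀ i ≤ n, f^[i] x ∈ ⋃ k, B k) →
      ∃ k₀ kₙ, f^[n] x ∈ B kₙ ∧ L ^ n * φ k₀ ≤ φ kₙ * ∏ i ∈ range n, g (f^[i] x) := by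
  intro n horbit
  induction n with
  | zero =>
    obtain ⟨k, hk⟩ := Set.mem_iUnion.1 (horbit 0 le_rfl)
    exact ⟨k, k, hk, by simp⟩
  | succ n ih =>
    obtain ⟨k₀, k, hk, hbound⟩ := ih fun i hi => horbit i (hi.trans n.le_succ)
    obtain ⟨j, hj⟩ := Set.mem_iUnion.1 (horbit (n + 1) le_rfl)
    rw [Function.iterate_succ_apply'] at hj
    have hstep := hexp k j ⟨_, Set.mem_image_of_mem f hk, hj⟩ _ hk
    have hprod : 0 ≤ ∏ i ∈ range n, g (f^[i] x) := prod_nonneg fun i _ => hg _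
    refine ⟨k₀, j, by rwa [Function.iterate_succ_apply'], ?_⟩
    calc L ^ (n + 1) * φ k₀ = L * (L ^ n * φ k₀) := by ring
      _ ≤ L * (φ k * ∏ i ∈ range n, g (f^[i] x)) := mul_le_mul_of_nonneg_left hbound hL
      _ = L * φ k * ∏ i ∈ range n, g (f^[i] x) := by ring
      _ ≤ φ j * g (f^[n] x) * ∏ i ∈ range n, g (f^[i] x) :=
        mul_le_mul_of_nonneg_right hstep hprod
      _ = φ j * ∏ i ∈ range (n + 1), g (f^[i] x) := by rw [prod_range_succ]; ring

theorem stmt15_general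
    (f : ℂ × ℂ → ℂ × ℂ)
    (dq : ℂ × ℂ → ℂ)
    (N : ℕ) (hN : 0 < N)
    (B : Fin N → Set (ℂ × ℂ))
    (L : ℝ) (hL : 1 < L)
    (φ : Fin N → ℝ) (hφ : ∀ k, 0 < φ k)
    (hexp : ∀ k j : Fin N, (f '' B k ∩ B j).Nonempty →
      ∀ x ∈ B k, φ j * ‖dq x‖ ≥ L * φ k)
    (𝓑 : Set (ℂ × ℂ)) (h𝓑 : 𝓑 = ⋃ k, B k)
    (c : ℝ)
    (hc : c = (Finset.univ.inf' ⟨⟨0, hN⟩, Finset.mem_univ _⟩ φ) /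
              (Finset.univ.sup' ⟨⟨0, hN⟩, Finset.mem_univ _⟩ φ)) :
    0 < c ∧
    ∀ n : ℕ, 1 ≤ n → ∀ x : ℂ × ℂ, (∀ i, i ≤ n → f^[i] x ∈ 𝓑) →
      ‖∏ i ∈ Finset.range n, dq (f^[i] x)‖ ≥ c * L ^ n := by
  subst h𝓑 hc
  refine ⟨inf'_div_sup'_pos _ hφ, fun n _ x horbit => ?_⟩
  obtain ⟨k₀, kₙ, -, hbound⟩ := exists_pow_mul_le_mul_prod_of_box_expansion f (‖dq ·‖)
    (fun _ => norm_nonneg _) B φ (zero_le_one.trans hL.le) hexp x n horbit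
  have hc := inf'_div_sup'_le_div ⟨⟨0, hN⟩, mem_univ _⟩ hφ (mem_univ k₀) (mem_univ kₙ)
  rw [ge_iff_le, norm_prod]
  calc _ ≤ φ k₀ / φ kₙ * L ^ n := by gcongr
    _ = L ^ n * φ k₀ / φ kₙ := by ring
    _ ≤ ∏ i ∈ range n, ‖dq (f^[i] x)‖ := by rwa [div_le_iff₀' (hφ kₙ)]

/-- Let `f(z,w) = (p(z), q(z,w))` be a polynomial skew product of `ℂ²`
(here `q` is encoded by `Q : Polynomial (Polynomial ℂ)`, a polynomial in `w` whose
coefficients are polynomials in `z`, so `q z w = (Q.map (evalRingHom z)).eval w` and the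
vertical derivative is `∂q/∂w(z,w) = (derivative (Q.map (evalRingHom z))).eval w`).
Let `B₁, …, B_N` be nonempty compact subsets of `ℂ²` with union `𝓑'`, and suppose `f`
is box vertically expansive: there are `L > 1` and positive `φₖ` with
`φⱼ·|∂q/∂w(z,w)| ≥ L·φₖ` for all `(z,w) ∈ Bₖ` whenever `f(Bₖ) ∩ Bⱼ ≠ ∅`.
Set `c = (minₖ φₖ)/(maxₖ φₖ) > 0`. Then for every `n ≥ 1` and every point `x = (z,w)`
with `fⁱ(x) ∈ 𝓑'` for `i = 0, …, n`, one has
`|(Qⁿ_z)'(w)| = |∏_{i<n} ∂q/∂w(fⁱ(x))| ≥ c·Lⁿ`. -/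
theorem stmt15 (P : Polynomial ℂ) (Q : Polynomial (Polynomial ℂ))
    (q : ℂ → ℂ → ℂ)
    (hq : ∀ z w, q z w = (Q.map (Polynomial.evalRingHom z)).eval w)
    (f : ℂ × ℂ → ℂ × ℂ)
    (hf : ∀ x : ℂ × ℂ, f x = (P.eval x.1, q x.1 x.2))
    (dq : ℂ × ℂ → ℂ)
    (hdq : ∀ x : ℂ × ℂ,
      dq x = (Polynomial.derivative (Q.map (Polynomial.evalRingHom x.1))).eval x.2)
    (N : ℕ) (hN : 0 < N)
    (B : Fin N → Set (ℂ × ℂ))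
    (hBne : ∀ k, (B k).Nonempty) (hBcpt : ∀ k, IsCompact (B k))
    (L : ℝ) (hL : 1 < L)
    (φ : Fin N → ℝ) (hφ : ∀ k, 0 < φ k)
    (hexp : ∀ k j : Fin N, (f '' B k ∩ B j).Nonempty →
      ∀ x ∈ B k, φ j * ‖dq x‖ ≥ L * φ k)
    (𝓑 : Set (ℂ × ℂ)) (h𝓑 : 𝓑 = ⋃ k, B k)
    (c : ℝ)
    (hc : c = (Finset.univ.inf' ⟨⟨0, hN⟩, Finset.mem_univ _⟩ φ) /
              (Finset.univ.sup' ⟨⟨0, hN⟩, Finset.mem_univ _⟩ φ)) :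
    0 < c ∧
    ∀ n : ℕ, 1 ≤ n → ∀ x : ℂ × ℂ, (∀ i, i ≤ n → f^[i] x ∈ 𝓑) →
      ‖∏ i ∈ Finset.range n, dq (f^[i] x)‖ ≥ c * L ^ n :=
  stmt15_general f dq N hN B L hL φ hφ hexp 𝓑 h𝓑 c hc
end

section
/- Let √80 = 4√5 and consider the skew product f(z,w) = (z² - 90, w² + z(0.046 + 0.04i) - 0.56 + 0.37i). For every real z ∈ [-10, -√80], the fiber map q_z(w) = w² + c(z) with c(z) = z(0.046 + 0.04i) - 0.56 + 0.37i has an attracting cycle of period 2: there exist w₀ ≠ w₁ in ℂ with w₀² + c(z) = w₁, w₁² + c(z) = w₀, and |4·w₀·w₁| < 1. (Hence q_z lies in the same hyperbolic component of the Mandelbrot set as the Basillica map w ↦ w² - 1.) -/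
/-!
The period-2 points of `w ↦ w² + c` are the roots of `w² + w + (c + 1)`, the quotient of
`q(q(w)) - w` by the fixed-point polynomial `w² - w + c`. Hence `w₀ + w₁ = -1`,
`w₀ w₁ = c + 1`, and the multiplier of the cycle is `4 w₀ w₁ = 4 (c + 1)`: the cycle is
attracting exactly when `|c + 1| < 1/4`. For the fiber parameter `c(z)`, `|4 (c(z) + 1)|²` is
a convex quadratic in `z`, so it is below `1` on `[-10, -√80] ⊆ [-10, -8.9]` once it is at
both endpoints.
-/

open Polynomial

theorem exists_root_quadratic_monic {K : Type*} [Field K] [IsAlgClosed K] (a : K) :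
    ∃ w : K, w ^ 2 + w + a = 0 := by
  have hdeg : (X ^ 2 + X + C a : K[X]).degree ≠ 0 := by
    rw [show (X ^ 2 + X + C a : K[X]) = C 1 * X ^ 2 + C 1 * X + C a by simp,
      degree_quadratic one_ne_zero]
    decide
  obtain ⟨w, hw⟩ := IsAlgClosed.exists_root _ hdeg
  exact ⟨w, by simpa using hw⟩

theorem exists_two_cycle_of_four_mul_ne_one {K : Type*} [Field K] [IsAlgClosed K] {c : K}
    (hc : 4 * (c + 1) ≠ 1) :
    ∃ w₀ w₁ : K, w₀ ≠ w₁ ∧ w₀ ^ 2 + c = w₁ ∧ w₁ ^ 2 + c = w₀ ∧ w₀ * w₁ = c + 1 := by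
  obtain ⟨w, hw⟩ := exists_root_quadratic_monic (c + 1)
  refine ⟨w, -1 - w, fun h => hc ?_, by linear_combination hw, by linear_combination hw,
    by linear_combination -hw⟩
  linear_combination 4 * hw - (2 * w + 1) * h

theorem exists_attracting_two_cycle {c : ℂ} (hc : ‖4 * (c + 1)‖ < 1) :
    ∃ w₀ w₁ : ℂ, w₀ ≠ w₁ ∧ w₀ ^ 2 + c = w₁ ∧ w₁ ^ 2 + c = w₀ ∧ ‖4 * w₀ * w₁‖ < 1 := by
  have hne : 4 * (c + 1) ≠ 1 := fun h => by simp [h] at hc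
  obtain ⟨w₀, w₁, hne, h₀, h₁, hprod⟩ := exists_two_cycle_of_four_mul_ne_one hne
  exact ⟨w₀, w₁, hne, h₀, h₁, by rwa [mul_assoc, hprod]⟩

theorem le_sqrt_eighty : (8.9 : ℝ) ≤ √80 :=
  (Real.le_sqrt (by norm_num) (by norm_num)).2 (by norm_num)

theorem norm_four_mul_fiber_add_one_lt {z : ℝ} (hz : z ∈ Set.Icc (-10 : ℝ) (-√80)) :
    ‖4 * ((z : ℂ) * (46 / 1000 + (4 / 100) * Complex.I)
      - 56 / 100 + (37 / 100) * Complex.I + 1)‖ < 1 := by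
  obtain ⟨hlo, hhi⟩ := hz
  have hhi' : z ≤ -8.9 := hhi.trans (neg_le_neg le_sqrt_eighty)
  rw [← abs_norm, ← sq_lt_one_iff_abs_lt_one, Complex.sq_norm, Complex.normSq_apply]
  simp only [Complex.mul_re, Complex.mul_im, Complex.add_re, Complex.add_im, Complex.sub_re,
    Complex.sub_im, Complex.ofReal_re, Complex.ofReal_im, Complex.I_re, Complex.I_im]
  norm_num
  nlinarith [mul_nonneg (sub_nonneg.2 hlo) (sub_nonneg.2 hhi')]

/-- For the skew product
`f(z,w) = (z² - 90, w² + z(0.046 + 0.04i) - 0.56 + 0.37i)` and every real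
`z ∈ [-10, -√80]`, the fiber map `q_z(w) = w² + c(z)` with
`c(z) = z(0.046 + 0.04i) - 0.56 + 0.37i` has an attracting cycle of period 2:
there are `w₀ ≠ w₁` in `ℂ` with `w₀² + c(z) = w₁`, `w₁² + c(z) = w₀`, and
`|4·w₀·w₁| < 1`. (Hence `q_z` lies in the same hyperbolic component of the Mandelbrot
set as the Basillica `w ↦ w² - 1`.) The constants are exact rationals. -/
theorem stmt18 :
    ∀ z ∈ Set.Icc (-10 : ℝ) (-Real.sqrt 80),
      ∃ w₀ w₁ : ℂ, w₀ ≠ w₁ ∧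
        w₀ ^ 2 + ((z : ℂ) * (46 / 1000 + (4 / 100) * Complex.I)
          - 56 / 100 + (37 / 100) * Complex.I) = w₁ ∧
        w₁ ^ 2 + ((z : ℂ) * (46 / 1000 + (4 / 100) * Complex.I)
          - 56 / 100 + (37 / 100) * Complex.I) = w₀ ∧
        ‖4 * w₀ * w₁‖ < 1 :=
  fun _ hz => exists_attracting_two_cycle (norm_four_mul_fiber_add_one_lt hz)
end

section
/- Let √80 = 4√5 and consider the skew product f(z,w) = (z² - 90, w² + z(0.046 + 0.04i) - 0.56 + 0.37i). For every real z ∈ [√80, 10], the fiber map q_z(w) = w² + c(z) with c(z) = z(0.046 + 0.04i) - 0.56 + 0.37i has an attracting cycle of period 3: there exist pairwise distinct w₀, w₁, w₂ in ℂ with w₀² + c(z) = w₁, w₁² + c(z) = w₂, w₂² + c(z) = w₀, and |8·w₀·w₁·w₂| < 1. (Hence q_z lies in the same hyperbolic component of the Mandelbrot set as the Rabbit map w ↦ w² - 0.12 + 0.75i.) -/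
/-!
For `q(w) = w² + c`, the two 3-cycles are indexed by the roots `γ` of `γ² + γ + c + 2 = 0`
(`γ` is the sum of the cycle): the cycle points are the roots of
`w³ - γw² + (c - 1 - γ)w - (cγ + c + 1)`, so the multiplier `8w₀w₁w₂` equals `8(cγ + c + 1)`.
Over the two roots `γ` and `-1 - γ` these multipliers have sum `8c + 16` and product
`64(c³ + 2c² + c + 1)`; for the parameters `c(z)` the product is small and the sum is large,
so one multiplier has modulus `< 1`. That cycle cannot collapse onto a fixed point `w`, since then
`4w² + 2w + 1 = 0` and its multiplier would be `(2w)³ = 1`.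
-/

open Complex Polynomial

theorem Function.ne_ne_of_three_cycle {α : Type*} {f : α → α} {a b d : α}
    (hab : f a = b) (hbd : f b = d) (hda : f d = a) (hne : a ≠ b) : b ≠ d ∧ a ≠ d := by
  constructor
  · rintro rfl
    exact hne (hda.symm.trans hbd)
  · rintro rfl
    exact hne (hda.symm.trans hab)

theorem norm_lt_one_or_of_norm_mul_add_one_lt {𝕜 : Type*} [NormedDivisionRing 𝕜] {a b : 𝕜}
    (h : ‖a * b‖ + 1 < ‖a + b‖) : ‖a‖ < 1 ∨ ‖b‖ < 1 := by
  by_contra! hab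
  have : ‖a‖ + ‖b‖ ≤ ‖a * b‖ + 1 := by
    rw [norm_mul]; nlinarith [hab.1, hab.2]
  linarith [norm_add_le a b]

namespace QuadraticThreeCycle

variable {c γ w : ℂ}

theorem iterate_three_eq_self (hγ : γ ^ 2 + γ + c + 2 = 0)
    (hw : w ^ 3 - γ * w ^ 2 + (c - 1 - γ) * w - (c * γ + c + 1) = 0) :
    ((w ^ 2 + c) ^ 2 + c) ^ 2 + c = w := by
  linear_combination ((w^2 - w + c) * (w^3 + (1+γ)*w^2 + (c+γ)*w + c*γ - 1)) * hw
      + (c^3 + 3*c^2*w^2 + c^2*w + 3*c*w^4 + 2*c*w^3 - c*w^2 + w^6 + w^5 - w^4 - w^3) * hγ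

theorem multiplier_eq (hγ : γ ^ 2 + γ + c + 2 = 0)
    (hw : w ^ 3 - γ * w ^ 2 + (c - 1 - γ) * w - (c * γ + c + 1) = 0) :
    8 * w * (w ^ 2 + c) * ((w ^ 2 + c) ^ 2 + c) = 8 * (c * γ + c + 1) := by
  linear_combination (8*c^2 + 16*c*γ^2 + 16*c*γ*w + 24*c*γ + 16*c*w^2 + 8*c*w
      + 16*c + 8*γ^4 + 8*γ^3*w + 24*γ^3 + 8*γ^2*w^2 + 16*γ^2*w + 32*γ^2
      + 8*γ*w^3 + 8*γ*w^2 + 16*γ*w + 32*γ + 8*w^4 + 8*w^2 + 8*w + 8) * hw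
      + (8*c^2*γ + 8*c^2 + 8*c*γ^3 + 24*c*γ^2 + 8*c*γ*w^2 + 8*c*γ*w + 16*c*γ
      + 8*c*w^2 + 8*c*w + 8*c + 8*γ^3*w^2 + 8*γ^3*w + 24*γ^2*w^2 + 24*γ^2*w
      + 8*γ^2 + 16*γ*w^2 + 24*γ*w + 16*γ + 8*w^2 + 8*w) * hγ

theorem sq_add_ne_self (hγ : γ ^ 2 + γ + c + 2 = 0)
    (hw : w ^ 3 - γ * w ^ 2 + (c - 1 - γ) * w - (c * γ + c + 1) = 0)
    (hμ : 8 * (c * γ + c + 1) ≠ 1) : w ^ 2 + c ≠ w := by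
  intro hfix
  obtain rfl : c = w - w ^ 2 := by linear_combination hfix
  have hγw : 2 * γ * w = 2 * w ^ 2 - 2 * w - 1 := by linear_combination -hw
  have hcube : 4 * w ^ 2 + 2 * w + 1 = 0 := by
    linear_combination 4 * w ^ 2 * hγ - (2 * γ * w + 2 * w ^ 2 - 2 * w - 1 + 2 * w) * hγw
  apply hμ
  rw [← multiplier_eq hγ hw, hfix, hfix]
  linear_combination (2 * w - 1) * hcube

theorem exists_cubic_root (c γ : ℂ) :
    ∃ w : ℂ, w ^ 3 - γ * w ^ 2 + (c - 1 - γ) * w - (c * γ + c + 1) = 0 := by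
  have hdeg : (X ^ 3 - C γ * X ^ 2 + C (c - 1 - γ) * X - C (c * γ + c + 1)).degree = 3 := by
    compute_degree!
  obtain ⟨w, hw⟩ := Complex.exists_root (hdeg ▸ (by decide : (0 : WithBot ℕ) < 3))
  exact ⟨w, by simpa using hw⟩

theorem exists_orbitSum_multiplier_lt_one
    (h : ‖64 * (c ^ 3 + 2 * c ^ 2 + c + 1)‖ + 1 < ‖8 * c + 16‖) :
    ∃ γ : ℂ, γ ^ 2 + γ + c + 2 = 0 ∧ ‖8 * (c * γ + c + 1)‖ < 1 := by
  obtain ⟨s, hs⟩ := IsAlgClosed.exists_pow_nat_eq (-4 * c - 7) two_pos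
  have hγ : ((s - 1) / 2) ^ 2 + (s - 1) / 2 + c + 2 = 0 := by linear_combination hs / 4
  have hγ' : (-1 - (s - 1) / 2) ^ 2 + (-1 - (s - 1) / 2) + c + 2 = 0 := by
    linear_combination hγ
  have hprod : 8 * (c * ((s - 1) / 2) + c + 1) * (8 * (c * (-1 - (s - 1) / 2) + c + 1))
      = 64 * (c ^ 3 + 2 * c ^ 2 + c + 1) := by linear_combination -16 * c ^ 2 * hs
  have hsum : 8 * (c * ((s - 1) / 2) + c + 1) + 8 * (c * (-1 - (s - 1) / 2) + c + 1)
      = 8 * c + 16 := by ring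
  rw [← hprod, ← hsum] at h
  rcases norm_lt_one_or_of_norm_mul_add_one_lt h with h | h
  exacts [⟨_, hγ, h⟩, ⟨_, hγ', h⟩]

theorem exists_attracting_of_norm_lt
    (h : ‖64 * (c ^ 3 + 2 * c ^ 2 + c + 1)‖ + 1 < ‖8 * c + 16‖) :
    ∃ w₀ w₁ w₂ : ℂ, w₀ ≠ w₁ ∧ w₁ ≠ w₂ ∧ w₀ ≠ w₂ ∧
      w₀ ^ 2 + c = w₁ ∧ w₁ ^ 2 + c = w₂ ∧ w₂ ^ 2 + c = w₀ ∧ ‖8 * w₀ * w₁ * w₂‖ < 1 := by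
  obtain ⟨γ, hγ, hμ⟩ := exists_orbitSum_multiplier_lt_one h
  obtain ⟨w, hw⟩ := exists_cubic_root c γ
  have hne : w ≠ w ^ 2 + c := (sq_add_ne_self hγ hw (fun h => by simp [h] at hμ)).symm
  obtain ⟨hne₁₂, hne₀₂⟩ := Function.ne_ne_of_three_cycle (f := fun v => v ^ 2 + c) rfl rfl
    (iterate_three_eq_self hγ hw) hne
  refine ⟨w, _, _, hne, hne₁₂, hne₀₂, rfl, rfl, iterate_three_eq_self hγ hw, ?_⟩
  rwa [multiplier_eq hγ hw]

end QuadraticThreeCycle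

noncomputable def fiberParam (z : ℝ) : ℂ :=
  z * (46 / 1000 + 4 / 100 * I) - 56 / 100 + 37 / 100 * I

@[simp] theorem fiberParam_re (z : ℝ) : (fiberParam z).re = 46 / 1000 * z - 56 / 100 := by
  simp [fiberParam]; ring

@[simp] theorem fiberParam_im (z : ℝ) : (fiberParam z).im = 4 / 100 * z + 37 / 100 := by
  simp [fiberParam]; ring

theorem Complex.re_cubic (c : ℂ) : (c ^ 3 + 2 * c ^ 2 + c + 1).re
    = c.re ^ 3 - 3 * c.re * c.im ^ 2 + 2 * c.re ^ 2 - 2 * c.im ^ 2 + c.re + 1 := by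
  simp [pow_succ, mul_re, mul_im]; ring

theorem Complex.im_cubic (c : ℂ) : (c ^ 3 + 2 * c ^ 2 + c + 1).im
    = 3 * c.re ^ 2 * c.im - c.im ^ 3 + 4 * c.re * c.im + c.im := by
  simp [pow_succ, mul_re, mul_im]; ring

theorem norm_cubic_fiberParam_le {z : ℝ} (h₁ : 89 / 10 ≤ z) (h₂ : z ≤ 10) :
    ‖fiberParam z ^ 3 + 2 * fiberParam z ^ 2 + fiberParam z + 1‖ ≤ 3 / 20 := by
  have ha : 0 ≤ z - 89 / 10 := by linarith
  have hb : 0 ≤ 10 - z := by linarith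
  have hre : |(fiberParam z ^ 3 + 2 * fiberParam z ^ 2 + fiberParam z + 1).re| ≤ 1 / 10 := by
    rw [re_cubic, fiberParam_re, fiberParam_im, abs_le]
    constructor <;> nlinarith [mul_nonneg ha hb, mul_nonneg (mul_nonneg ha hb) hb,
      mul_nonneg (mul_nonneg ha hb) ha, pow_nonneg ha 3, pow_nonneg hb 3]
  have him : |(fiberParam z ^ 3 + 2 * fiberParam z ^ 2 + fiberParam z + 1).im| ≤ 1 / 20 := by
    rw [im_cubic, fiberParam_re, fiberParam_im, abs_le]
    constructor <;> nlinarith [mul_nonneg ha hb, mul_nonneg (mul_nonneg ha hb) hb,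
      mul_nonneg (mul_nonneg ha hb) ha, pow_nonneg ha 3, pow_nonneg hb 3]
  linarith [norm_le_abs_re_add_abs_im
    (fiberParam z ^ 3 + 2 * fiberParam z ^ 2 + fiberParam z + 1)]

theorem norm_eight_mul_fiberParam_add_sixteen {z : ℝ} (h : 89 / 10 ≤ z) :
    14 ≤ ‖8 * fiberParam z + 16‖ := by
  refine le_trans ?_ (re_le_norm _)
  simp only [add_re, mul_re, fiberParam_re, fiberParam_im]
  norm_num; linarith

/-- For the skew product
`f(z,w) = (z² - 90, w² + z(0.046 + 0.04i) - 0.56 + 0.37i)` and every real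
`z ∈ [√80, 10]`, the fiber map `q_z(w) = w² + c(z)` with
`c(z) = z(0.046 + 0.04i) - 0.56 + 0.37i` has an attracting cycle of period 3:
there are pairwise distinct `w₀, w₁, w₂` in `ℂ` with `w₀² + c(z) = w₁`,
`w₁² + c(z) = w₂`, `w₂² + c(z) = w₀`, and `|8·w₀·w₁·w₂| < 1`. (Hence `q_z` lies in the
same hyperbolic component of the Mandelbrot set as the Rabbit `w ↦ w² - 0.12 + 0.75i`.)
The constants are exact rationals. -/
theorem stmt19 :
    ∀ z ∈ Set.Icc (Real.sqrt 80) (10 : ℝ),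
      ∃ w₀ w₁ w₂ : ℂ, w₀ ≠ w₁ ∧ w₁ ≠ w₂ ∧ w₀ ≠ w₂ ∧
        w₀ ^ 2 + ((z : ℂ) * (46 / 1000 + (4 / 100) * Complex.I)
          - 56 / 100 + (37 / 100) * Complex.I) = w₁ ∧
        w₁ ^ 2 + ((z : ℂ) * (46 / 1000 + (4 / 100) * Complex.I)
          - 56 / 100 + (37 / 100) * Complex.I) = w₂ ∧
        w₂ ^ 2 + ((z : ℂ) * (46 / 1000 + (4 / 100) * Complex.I)
          - 56 / 100 + (37 / 100) * Complex.I) = w₀ ∧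
        ‖8 * w₀ * w₁ * w₂‖ < 1 := by
  rintro z ⟨hz₁, hz₂⟩
  have hz : 89 / 10 ≤ z :=
    le_trans ((Real.le_sqrt (by norm_num) (by norm_num)).2 (by norm_num)) hz₁
  apply QuadraticThreeCycle.exists_attracting_of_norm_lt (c := fiberParam z)
  rw [norm_mul, RCLike.norm_ofNat]
  linarith [norm_cubic_fiberParam_le hz hz₂, norm_eight_mul_fiberParam_add_sixteen hz]
end
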